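/- arXiv:2310.05609 — 2 statements merged into one kernel-verified Lean document; each statement's English description precedes it below -/
import Mathlib

section
/- Let G be a finite simple connected graph with at least 3 vertices. Then χ'_L(G) = 2 if and only if G is isomorphic to the path P_3 on three vertices. -/
open SimpleGraph

/-- Distance from a vertex to an edge: the minimum of the distances to the two endpoints. -/
noncomputable def edgeDist {V : Type*} (G : SimpleGraph V) (v : V) (e : Sym2 V) : ℕ :=
  Sym2.lift ⟨fun x y => min (G.dist v x) (G.dist v y), fun _ _ => min_comm _ _⟩ e

/-- Distance (in `ℕ∞`) from a vertex to the `i`-th color class of an edge coloring `c`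
(it is `⊤` if the class is empty). -/
noncomputable def classDist {V : Type*} (G : SimpleGraph V) {k : ℕ} (c : Sym2 V → Fin k)
    (v : V) (i : Fin k) : ℕ∞ :=
  ⨅ e ∈ {e | e ∈ G.edgeSet ∧ c e = i}, (edgeDist G v e : ℕ∞)

/-- `c` is an edge-locating `k`-coloring of `G`: it is a proper edge coloring (distinct edges
sharing an endpoint get different colors), and distinct vertices have distinct edge color codes
`(d(v, C_1), …, d(v, C_k))`. -/
def IsEdgeLocatingColoring {V : Type*} (G : SimpleGraph V) {k : ℕ} (c : Sym2 V → Fin k) : Prop :=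
  (∀ e ∈ G.edgeSet, ∀ f ∈ G.edgeSet, e ≠ f → (∃ x, x ∈ e ∧ x ∈ f) → c e ≠ c f) ∧
  (∀ u v : V, u ≠ v → ∃ i, classDist G c u i ≠ classDist G c v i)

/-- The edge-locating chromatic number `χ'_L(G)`: the least `k` such that `G` admits an
edge-locating `k`-coloring. -/
noncomputable def edgeLocatingChromaticNumber {V : Type*} (G : SimpleGraph V) : ℕ :=
  sInf {k | ∃ c : Sym2 V → Fin k, IsEdgeLocatingColoring G c}

/-- The join `G + H` of two graphs: all edges of `G`, all edges of `H`, and all edges between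
a vertex of `G` and a vertex of `H`. -/
def graphJoin {α β : Type*} (G : SimpleGraph α) (H : SimpleGraph β) : SimpleGraph (α ⊕ β) :=
  SimpleGraph.fromRel (fun x y =>
    (∃ a b, x = Sum.inl a ∧ y = Sum.inl b ∧ G.Adj a b) ∨
    (∃ a b, x = Sum.inr a ∧ y = Sum.inr b ∧ H.Adj a b) ∨
    (∃ a b, x = Sum.inl a ∧ y = Sum.inr b))

/-- A set `M` of edges of `G` forming a matching: pairwise vertex-disjoint edges of `G`. -/
def IsMatchingSet {V : Type*} (G : SimpleGraph V) (M : Set (Sym2 V)) : Prop :=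
  M ⊆ G.edgeSet ∧ ∀ e ∈ M, ∀ f ∈ M, e ≠ f → ∀ x, x ∈ e → x ∉ f

lemma walk_aux {V : Type*} {G : SimpleGraph V} {b : V}
    (hdeg : ∀ v, v ≠ b → ∀ p q, G.Adj v p → G.Adj v q → p = q) :
    ∀ {u : V}, G.Walk u b → u = b ∨ G.Adj u b := by
  intro u w
  induction w with
  | nil => exact Or.inl rfl
  | cons h p ih =>
    rcases ih hdeg with rfl | hxb
    · exact Or.inr h
    · exact Or.inl (hdeg _ hxb.ne _ _ h.symm hxb)

noncomputable def build_iso {V : Type*} (G : SimpleGraph V) {x b y : V}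
    (hxb : G.Adj x b) (hby : G.Adj b y) (hxy : ¬ G.Adj x y) (hxyne : x ≠ y)
    (hall : ∀ w, w = x ∨ w = b ∨ w = y) : G ≃g pathGraph 3 := by
  classical
  have hbx : b ≠ x := hxb.ne'
  have hby' : b ≠ y := hby.ne
  have hyx : y ≠ x := hxyne.symm
  have hyb : y ≠ b := hby.ne'
  refine ⟨⟨fun w => if w = x then 0 else if w = b then 1 else 2, ![x, b, y], ?_, ?_⟩, ?_⟩
  · intro w
    rcases hall w with rfl | rfl | rfl
    · simp
    · simp [hbx]
    · simp [hyx, hyb]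
  · intro i
    fin_cases i
    · simp
    · simp [hbx]
    · simp [hyx, hyb]
  · intro u v
    rcases hall u with rfl | rfl | rfl <;> rcases hall v with rfl | rfl | rfl <;>
        simp only [Equiv.coe_fn_mk, if_pos rfl, if_neg hbx, if_neg hyx, if_neg hyb,
          pathGraph_adj] <;>
      try simp_all [hxb.symm, hby.symm, G.irrefl, fun h => hxy (G.adj_symm h)]
    all_goals exact fun h => hxy h.symm

section Helpers

open SimpleGraph

lemma edgeDist_mk {V : Type*} (G : SimpleGraph V) (v a b : V) :
    edgeDist G v s(a, b) = min (G.dist v a) (G.dist v b) := rfl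

lemma sym2_ne_of {V : Type*} {v p q : V} (hpq : p ≠ q) (hvq : v ≠ q) :
    s(v, p) ≠ s(v, q) := by
  intro h
  rcases Sym2.eq_iff.mp h with ⟨-, h2⟩ | ⟨h1, -⟩
  · exact hpq h2
  · exact hvq h1

lemma classDist_le' {V : Type*} (G : SimpleGraph V) {k : ℕ} (c : Sym2 V → Fin k)
    (v : V) (i : Fin k) {e : Sym2 V} (he : e ∈ G.edgeSet) (hc : c e = i) :
    classDist G c v i ≤ (edgeDist G v e : ℕ∞) :=
  iInf₂_le e ⟨he, hc⟩

lemma classDist_eq_zero {V : Type*} (G : SimpleGraph V) {k : ℕ} (c : Sym2 V → Fin k)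
    (v p : V) (i : Fin k) (h : G.Adj v p) (hc : c s(v, p) = i) :
    classDist G c v i = 0 := by
  have h1 : classDist G c v i ≤ (edgeDist G v s(v,p) : ℕ∞) :=
    classDist_le' G c v i (G.mem_edgeSet.mpr h) hc
  rw [edgeDist_mk] at h1
  simpa [SimpleGraph.dist_self] using h1

lemma classDist_singleton {V : Type*} (G : SimpleGraph V) {k : ℕ} (c : Sym2 V → Fin k)
    (v : V) (i : Fin k) {e0 : Sym2 V}
    (hset : {e | e ∈ G.edgeSet ∧ c e = i} = {e0}) :
    classDist G c v i = (edgeDist G v e0 : ℕ∞) := by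
  rw [classDist, hset]
  simp

/-- A vertex with two distinct neighbors has edge color code `(0,0)` under a proper
2-edge-coloring. -/
lemma code_zero {V : Type*} (G : SimpleGraph V) (c : Sym2 V → Fin 2)
    (hp : ∀ e ∈ G.edgeSet, ∀ f ∈ G.edgeSet, e ≠ f → (∃ x, x ∈ e ∧ x ∈ f) → c e ≠ c f)
    {v p q : V} (hpq : p ≠ q) (h1 : G.Adj v p) (h2 : G.Adj v q) (i : Fin 2) :
    classDist G c v i = 0 := by
  have hne : s(v, p) ≠ s(v, q) := sym2_ne_of hpq h2.ne
  have hcc : c s(v,p) ≠ c s(v,q) :=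
    hp _ (G.mem_edgeSet.mpr h1) _ (G.mem_edgeSet.mpr h2) hne
      ⟨v, Sym2.mem_mk_left _ _, Sym2.mem_mk_left _ _⟩
  have : i = c s(v,p) ∨ i = c s(v,q) := by
    revert hcc; generalize c s(v,p) = a; generalize c s(v,q) = b; revert i a b; decide
  rcases this with h | h
  · exact classDist_eq_zero G c v p i h1 h.symm
  · exact classDist_eq_zero G c v q i h2 h.symm

lemma fin2_triple {a b c : Fin 2} (h1 : a ≠ b) (h2 : a ≠ c) (h3 : b ≠ c) : False := by
  revert h1 h2 h3; revert a b c; decide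

/-- From an edge-locating 2-coloring of a connected graph on at least 3 vertices,
extract the `P_3` configuration. -/
lemma config_of_two {V : Type*} [Fintype V] {G : SimpleGraph V} (hG : G.Connected)
    (hV : 3 ≤ Fintype.card V) (c : Sym2 V → Fin 2) (h : IsEdgeLocatingColoring G c) :
    ∃ x b y : V, G.Adj x b ∧ G.Adj b y ∧ ¬G.Adj x y ∧ x ≠ y ∧
      ∀ w, w = x ∨ w = b ∨ w = y := by
  classical
  obtain ⟨hp, hloc⟩ := h
  -- at most one branching vertex
  have huniq : ∀ v v' : V, (∃ p q, p ≠ q ∧ G.Adj v p ∧ G.Adj v q) →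
      (∃ p q, p ≠ q ∧ G.Adj v' p ∧ G.Adj v' q) → v = v' := by
    intro v v' ⟨p, q, hpq, h1, h2⟩ ⟨p', q', hpq', h1', h2'⟩
    by_contra hne
    obtain ⟨i, hi⟩ := hloc v v' hne
    rw [code_zero G c hp hpq h1 h2 i, code_zero G c hp hpq' h1' h2' i] at hi
    exact hi rfl
  -- there is a branching vertex
  have hex : ∃ b : V, ∃ p q, p ≠ q ∧ G.Adj b p ∧ G.Adj b q := by
    by_contra hno
    push_neg at hno
    obtain ⟨u, v, huv⟩ := Fintype.exists_pair_of_one_lt_card (α := V) (by omega)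
    have hw : ∃ w : V, w ≠ u ∧ w ≠ v := by
      by_contra hc2
      push_neg at hc2
      have hsub : (Finset.univ : Finset V) ⊆ {u, v} := by
        intro w _
        by_cases hwu : w = u
        · simp [hwu]
        · simp [hc2 w hwu]
      have hc3 := Finset.card_le_card hsub
      have h2 : ({u, v} : Finset V).card ≤ 2 := (Finset.card_insert_le _ _).trans (by simp)
      rw [Finset.card_univ] at hc3
      omega
    obtain ⟨w, hwu, hwv⟩ := hw
    have hdeg : ∀ z : V, ∀ p q : V, G.Adj z p → G.Adj z q → p = q := by
      intro z p q h1 h2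
      by_contra hpq
      exact hno z p q hpq h1 h2
    have key : ∀ a e : V, a = e ∨ G.Adj a e := by
      intro a e
      obtain ⟨walk⟩ := hG a e
      exact walk_aux (fun v _ p q h1 h2 => hdeg v p q h1 h2) walk
    have h1 : G.Adj u v := (key u v).resolve_left huv
    have h2 : G.Adj u w := (key u w).resolve_left (fun h => hwu h.symm)
    exact hno u v w (fun h => hwv h.symm) h1 h2
  obtain ⟨b, p, q, hpq, hbp, hbq⟩ := hex
  have hbbranch : ∃ p' q', p' ≠ q' ∧ G.Adj b p' ∧ G.Adj b q' := ⟨p, q, hpq, hbp, hbq⟩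
  -- b has no third neighbor
  have hdeg2 : ∀ w, G.Adj b w → w = p ∨ w = q := by
    intro w hw
    by_contra hcon
    push_neg at hcon
    obtain ⟨hwp, hwq⟩ := hcon
    have e1 : s(b,p) ≠ s(b,q) := sym2_ne_of hpq hbq.ne
    have e2 : s(b,p) ≠ s(b,w) := sym2_ne_of (fun h => hwp h.symm) hw.ne
    have e3 : s(b,q) ≠ s(b,w) := sym2_ne_of (fun h => hwq h.symm) hw.ne
    have m1 := G.mem_edgeSet.mpr hbp
    have m2 := G.mem_edgeSet.mpr hbq
    have m3 := G.mem_edgeSet.mpr hw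
    have shareb : ∀ z : V, (b : V) ∈ s(b, z) := fun z => Sym2.mem_mk_left _ _
    exact fin2_triple (hp _ m1 _ m2 e1 ⟨b, shareb p, shareb q⟩)
      (hp _ m1 _ m3 e2 ⟨b, shareb p, shareb w⟩)
      (hp _ m2 _ m3 e3 ⟨b, shareb q, shareb w⟩)
  -- every vertex is b or adjacent to b
  have hnear : ∀ w : V, w = b ∨ G.Adj w b := by
    intro w
    obtain ⟨walk⟩ := hG w b
    refine walk_aux (fun v hvb p q h1 h2 => ?_) walk
    by_contra hpq
    exact hvb (huniq v b ⟨p, q, hpq, h1, h2⟩ hbbranch)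
  -- clean up: hnear gives all vertices in {p, b, q}
  have hall : ∀ w : V, w = p ∨ w = b ∨ w = q := by
    intro w
    rcases hnear w with rfl | hwb
    · exact Or.inr (Or.inl rfl)
    · rcases hdeg2 w hwb.symm with rfl | rfl
      · exact Or.inl rfl
      · exact Or.inr (Or.inr rfl)
  -- no edge between p and q
  have hpqadj : ¬ G.Adj p q := by
    intro hadj
    have : p = b := huniq p b ⟨b, q, hbq.ne, hbp.symm, hadj⟩ hbbranch
    exact hbp.ne' this
  exact ⟨p, b, q, hbp.symm, hbq, hpqadj, hpq, hall⟩

end Helpers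

open SimpleGraph in
/-- A graph with the `P_3` configuration has edge-locating chromatic number 2. -/
lemma two_of_config {V : Type*} {G : SimpleGraph V} (hG : G.Connected)
    {x b y : V} (hxb : G.Adj x b) (hby : G.Adj b y) (hxy : ¬G.Adj x y) (hxyne : x ≠ y)
    (hall : ∀ w, w = x ∨ w = b ∨ w = y) :
    edgeLocatingChromaticNumber G = 2 := by
  classical
  have hbx : b ≠ x := hxb.ne'
  have hby' : b ≠ y := hby.ne
  have hyx : y ≠ x := hxyne.symm
  have hyb : y ≠ b := hby.ne'
  have hxb' : x ≠ b := hxb.ne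
  -- the two edges
  have heBA : s(b, y) ≠ s(x, b) := by
    intro h
    rcases Sym2.eq_iff.mp h with ⟨h1, -⟩ | ⟨-, h2⟩
    · exact hbx h1
    · exact hyx h2
  have heAB : s(x, b) ≠ s(b, y) := fun h => heBA h.symm
  -- edge set characterization
  have hE : ∀ e ∈ G.edgeSet, e = s(x, b) ∨ e = s(b, y) := by
    intro e he
    induction e using Sym2.ind with
    | _ u v =>
      rw [SimpleGraph.mem_edgeSet] at he
      rcases hall u with rfl | rfl | rfl <;> rcases hall v with rfl | rfl | rfl
      · exact absurd he (G.irrefl)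
      · exact Or.inl rfl
      · exact absurd he hxy
      · exact Or.inl (Sym2.eq_swap)
      · exact absurd he (G.irrefl)
      · exact Or.inr rfl
      · exact absurd he (fun h => hxy h.symm)
      · exact Or.inr (Sym2.eq_swap)
      · exact absurd he (G.irrefl)
  -- the coloring
  set c0 : Sym2 V → Fin 2 := fun e => if e = s(x, b) then 0 else 1 with hc0
  have hc0A : c0 s(x, b) = 0 := if_pos rfl
  have hc0B : c0 s(b, y) = 1 := if_neg heBA
  have hclass0 : {e | e ∈ G.edgeSet ∧ c0 e = 0} = {s(x, b)} := by
    ext e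
    simp only [Set.mem_setOf_eq, Set.mem_singleton_iff]
    constructor
    · rintro ⟨he, hc⟩
      rcases hE e he with rfl | rfl
      · rfl
      · rw [hc0B] at hc; exact absurd hc (by decide)
    · rintro rfl
      exact ⟨G.mem_edgeSet.mpr hxb, hc0A⟩
  have hclass1 : {e | e ∈ G.edgeSet ∧ c0 e = 1} = {s(b, y)} := by
    ext e
    simp only [Set.mem_setOf_eq, Set.mem_singleton_iff]
    constructor
    · rintro ⟨he, hc⟩
      rcases hE e he with rfl | rfl
      · rw [hc0A] at hc; exact absurd hc (by decide)
      · rfl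
    · rintro rfl
      exact ⟨G.mem_edgeSet.mpr hby, hc0B⟩
  -- distances
  have dxb : G.dist x b = 1 := SimpleGraph.dist_eq_one_iff_adj.mpr hxb
  have dby : G.dist b y = 1 := SimpleGraph.dist_eq_one_iff_adj.mpr hby
  have dxy : G.dist x y = 2 := by
    have hle : G.dist x y ≤ G.dist x b + G.dist b y := hG.dist_triangle
    have h0 : G.dist x y ≠ 0 := fun h => hxyne (hG.dist_eq_zero_iff.mp h)
    have h1 : G.dist x y ≠ 1 := fun h => hxy (SimpleGraph.dist_eq_one_iff_adj.mp h)
    omega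
  -- class distances
  have cd0 : ∀ v, classDist G c0 v 0 = ((min (G.dist v x) (G.dist v b) : ℕ) : ℕ∞) := by
    intro v
    rw [classDist_singleton G c0 v 0 hclass0, edgeDist_mk]
  have cd1 : ∀ v, classDist G c0 v 1 = ((min (G.dist v b) (G.dist v y) : ℕ) : ℕ∞) := by
    intro v
    rw [classDist_singleton G c0 v 1 hclass1, edgeDist_mk]
  have cx1 : classDist G c0 x 1 = 1 := by
    rw [cd1 x, dxb, dxy]; norm_num
  have cb1 : classDist G c0 b 1 = 0 := by
    rw [cd1 b, SimpleGraph.dist_self, dby]; norm_num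
  have cy1 : classDist G c0 y 1 = 0 := by
    rw [cd1 y, SimpleGraph.dist_comm, SimpleGraph.dist_self, dby]; norm_num
  have cx0 : classDist G c0 x 0 = 0 := by
    rw [cd0 x, SimpleGraph.dist_self, dxb]; norm_num
  have cb0 : classDist G c0 b 0 = 0 := by
    rw [cd0 b, SimpleGraph.dist_self, SimpleGraph.dist_comm, dxb]; norm_num
  have cy0 : classDist G c0 y 0 = 1 := by
    rw [cd0 y, SimpleGraph.dist_comm (v := x), SimpleGraph.dist_comm (v := b), dxy, dby]
    norm_num
  -- properness
  have hproper : ∀ e ∈ G.edgeSet, ∀ f ∈ G.edgeSet, e ≠ f → (∃ z, z ∈ e ∧ z ∈ f) →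
      c0 e ≠ c0 f := by
    intro e he f hf hef _
    rcases hE e he with rfl | rfl <;> rcases hE f hf with rfl | rfl
    · exact absurd rfl hef
    · rw [hc0A, hc0B]; decide
    · rw [hc0A, hc0B]; decide
    · exact absurd rfl hef
  -- locating
  have hlocating : ∀ u v : V, u ≠ v → ∃ i, classDist G c0 u i ≠ classDist G c0 v i := by
    intro u v huv
    rcases hall u with rfl | rfl | rfl <;> rcases hall v with rfl | rfl | rfl
    · exact absurd rfl huv
    · exact ⟨1, by rw [cx1, cb1]; exact one_ne_zero⟩
    · exact ⟨0, by rw [cx0, cy0]; exact zero_ne_one⟩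
    · exact ⟨1, by rw [cx1, cb1]; exact zero_ne_one⟩
    · exact absurd rfl huv
    · exact ⟨0, by rw [cb0, cy0]; exact zero_ne_one⟩
    · exact ⟨0, by rw [cx0, cy0]; exact one_ne_zero⟩
    · exact ⟨0, by rw [cb0, cy0]; exact one_ne_zero⟩
    · exact absurd rfl huv
  have h2 : 2 ∈ {k | ∃ c : Sym2 V → Fin k, IsEdgeLocatingColoring G c} :=
    ⟨c0, hproper, hlocating⟩
  have hne : {k | ∃ c : Sym2 V → Fin k, IsEdgeLocatingColoring G c}.Nonempty := ⟨2, h2⟩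
  have hmem := Nat.sInf_mem hne
  have hle := Nat.sInf_le h2
  rw [edgeLocatingChromaticNumber]
  set m := sInf {k | ∃ c : Sym2 V → Fin k, IsEdgeLocatingColoring G c} with hm
  obtain ⟨cm, hcmp, hcml⟩ := hmem
  rcases Nat.lt_or_ge m 2 with hlt | hge
  · exfalso
    interval_cases m
    · exact (cm s(x, b)).elim0
    · exact hcmp _ (G.mem_edgeSet.mpr hxb) _ (G.mem_edgeSet.mpr hby) heAB
        ⟨b, Sym2.mem_mk_right _ _, Sym2.mem_mk_left _ _⟩ (Subsingleton.elim _ _)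
  · omega

/-- A finite simple connected graph with at least `3` vertices has edge-locating chromatic
number `2` iff it is isomorphic to the path `P_3`. -/
theorem stmt_2 {V : Type*} [Fintype V] (G : SimpleGraph V) (hG : G.Connected)
    (hV : 3 ≤ Fintype.card V) :
    edgeLocatingChromaticNumber G = 2 ↔ Nonempty (G ≃g SimpleGraph.pathGraph 3) := by
  constructor
  · intro h
    have hne : {k | ∃ c : Sym2 V → Fin k, IsEdgeLocatingColoring G c}.Nonempty := by
      by_contra hempty
      rw [Set.not_nonempty_iff_eq_empty] at hempty
      rw [edgeLocatingChromaticNumber, hempty, Nat.sInf_empty] at h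
      omega
    have hmem := Nat.sInf_mem hne
    rw [show sInf {k | ∃ c : Sym2 V → Fin k, IsEdgeLocatingColoring G c}
        = edgeLocatingChromaticNumber G from rfl, h] at hmem
    obtain ⟨c, hc⟩ := hmem
    obtain ⟨x, b, y, hxb, hby, hxy, hxyne, hall⟩ := config_of_two hG hV c hc
    exact ⟨build_iso G hxb hby hxy hxyne hall⟩
  · rintro ⟨e⟩
    have h3 : ∀ i : Fin 3, i = 0 ∨ i = 1 ∨ i = 2 := by decide
    set x := e.symm 0 with hx
    set b := e.symm 1 with hb
    set y := e.symm 2 with hy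
    have hxb : G.Adj x b := e.symm.map_adj_iff.mpr (by rw [SimpleGraph.pathGraph_adj]; decide)
    have hby : G.Adj b y := e.symm.map_adj_iff.mpr (by rw [SimpleGraph.pathGraph_adj]; decide)
    have hxy : ¬G.Adj x y := fun h => by
      have := e.symm.map_adj_iff.mp h
      rw [SimpleGraph.pathGraph_adj] at this
      revert this; decide
    have hxyne : x ≠ y := fun h => by
      have := e.symm.injective h
      revert this; decide
    have hall : ∀ w, w = x ∨ w = b ∨ w = y := by
      intro w
      rcases h3 (e w) with hw | hw | hw
      · exact Or.inl (by rw [hx, ← hw, RelIso.symm_apply_apply])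
      · exact Or.inr (Or.inl (by rw [hb, ← hw, RelIso.symm_apply_apply]))
      · exact Or.inr (Or.inr (by rw [hy, ← hw, RelIso.symm_apply_apply]))
    exact two_of_config hG hxb hby hxy hxyne hall
end

section
/- Let n ≥ 1 and 1 ≤ k ≤ n, and let M_k be a matching with k edges in the complete graph K_{2n+1}. Then the edge-locating chromatic number of the graph K_{2n+1} − M_k (obtained from K_{2n+1} by deleting the edges of M_k) equals 2n + 1 if 1 ≤ k ≤ n − 1, and equals 2n if k = n. -/
open SimpleGraph

/-!
Label the vertices by `ZMod (2n+1)` so that the deleted edges are pairs `{x, -x}` with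
`x ∈ {1, …, k}`, and color every edge by the sum of its labels. This coloring is proper, and a
vertex `v` misses the color `2v` (and at most the color `0` besides), so distinct vertices already
differ in the set of colors at distance `0`: `2n + 1` colors suffice. When `k = n` no remaining
edge has label sum `0`, so that color can be dropped. Conversely, the vertex labelled `0` is
unmatched and has degree `2n`, and for `k < n` the graph has `n(2n+1) - k > 2n · n` edges while
every color class is a matching with at most `n` edges.
-/

open Finset

variable {V : Type*} {G : SimpleGraph V} {k : ℕ} {c : Sym2 V → Fin k}

def IsProperEdgeColoring (G : SimpleGraph V) (c : Sym2 V → Fin k) : Prop :=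
  ∀ e ∈ G.edgeSet, ∀ f ∈ G.edgeSet, e ≠ f → (∃ x, x ∈ e ∧ x ∈ f) → c e ≠ c f

theorem IsEdgeLocatingColoring.isProperEdgeColoring (hc : IsEdgeLocatingColoring G c) :
    IsProperEdgeColoring G c :=
  hc.1

theorem IsProperEdgeColoring.eq_of_mem {e f : Sym2 V} {x : V} (hc : IsProperEdgeColoring G c)
    (he : e ∈ G.edgeSet) (hf : f ∈ G.edgeSet) (hxe : x ∈ e) (hxf : x ∈ f) (hcef : c e = c f) :
    e = f :=
  by_contra fun hne ↦ hc e he f hf hne ⟨x, hxe, hxf⟩ hcef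

theorem IsProperEdgeColoring.degree_le [Fintype V] [DecidableEq V] [DecidableRel G.Adj]
    (hc : IsProperEdgeColoring G c) (v : V) : G.degree v ≤ k := by
  rw [← card_incidenceFinset_eq_degree]
  calc #(G.incidenceFinset v) ≤ #(univ : Finset (Fin k)) :=
        card_le_card_of_injOn c (fun _ _ ↦ mem_univ _) fun e he f hf hcef ↦ by
          simp only [coe_incidenceFinset] at he hf
          exact hc.eq_of_mem he.1 hf.1 he.2 hf.2 hcef
    _ = k := by simp

theorem IsProperEdgeColoring.card_edgeFinset_le [Fintype V] [DecidableEq V] [Fintype G.edgeSet]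
    (hc : IsProperEdgeColoring G c) : #G.edgeFinset ≤ k * (Fintype.card V / 2) := by
  have hclass (i : Fin k) : #{e ∈ G.edgeFinset | c e = i} * 2 ≤ Fintype.card V * 1 := by
    refine card_mul_le_card_mul (fun e v ↦ v ∈ e) (fun e he ↦ ?_) fun v _ ↦ ?_
    · have hnd : ¬e.IsDiag := G.not_isDiag_of_mem_edgeSet (mem_edgeFinset.1 (mem_filter.1 he).1)
      rw [← Sym2.card_toFinset_of_not_isDiag e hnd]
      exact card_le_card fun x hx ↦ by simpa [bipartiteAbove] using hx
    · refine card_le_one.2 fun e he f hf ↦ ?_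
      simp only [mem_bipartiteBelow, mem_filter, mem_edgeFinset] at he hf
      exact hc.eq_of_mem he.1.1 hf.1.1 he.2 hf.2 (he.1.2.trans hf.1.2.symm)
  calc #G.edgeFinset = ∑ i, #{e ∈ G.edgeFinset | c e = i} :=
        card_eq_sum_card_fiberwise fun _ _ ↦ mem_univ _
    _ ≤ ∑ _i : Fin k, Fintype.card V / 2 :=
        sum_le_sum fun i _ ↦ (Nat.le_div_iff_mul_le two_pos).2 (by simpa using hclass i)
    _ = k * (Fintype.card V / 2) := by simp

theorem edgeDist_eq_zero_iff (hG : G.Connected) {v : V} {e : Sym2 V} :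
    edgeDist G v e = 0 ↔ v ∈ e := by
  induction e using Sym2.ind with
  | h x y => simp [edgeDist, hG.dist_eq_zero_iff]

def incidentColors (G : SimpleGraph V) (c : Sym2 V → Fin k) (v : V) : Set (Fin k) :=
  {i | ∃ e ∈ G.edgeSet, c e = i ∧ v ∈ e}

theorem classDist_eq_zero_iff (hG : G.Connected) {v : V} {i : Fin k} :
    classDist G c v i = 0 ↔ i ∈ incidentColors G c v := by
  simp [classDist, incidentColors, edgeDist_eq_zero_iff hG, and_assoc]

theorem classDist_eq_top {i : Fin k} (h : ∀ e ∈ G.edgeSet, c e ≠ i) (v : V) :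
    classDist G c v i = ⊤ := by
  simp +contextual [classDist, h]

theorem isEdgeLocatingColoring_of_injective_incidentColors (hG : G.Connected)
    (hc : IsProperEdgeColoring G c) (hinj : Function.Injective (incidentColors G c)) :
    IsEdgeLocatingColoring G c := by
  refine ⟨hc, fun u v huv ↦ ?_⟩
  by_contra! h
  refine huv (hinj (Set.ext fun i ↦ ?_))
  rw [← classDist_eq_zero_iff hG, ← classDist_eq_zero_iff hG, h i]

theorem IsEdgeLocatingColoring.comp {k' : ℕ} (hc : IsEdgeLocatingColoring G c)
    {τ : Fin k → Fin k'} (hτ : Set.InjOn τ (c '' G.edgeSet)) :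
    IsEdgeLocatingColoring G (τ ∘ c) := by
  have hτc {e f : Sym2 V} (he : e ∈ G.edgeSet) (hf : f ∈ G.edgeSet) :
      τ (c e) = τ (c f) ↔ c e = c f :=
    hτ.eq_iff (Set.mem_image_of_mem c he) (Set.mem_image_of_mem c hf)
  refine ⟨fun e he f hf hne hx h ↦ hc.1 e he f hf hne hx ((hτc he hf).1 h), fun u v huv ↦ ?_⟩
  obtain ⟨i, hi⟩ := hc.2 u v huv
  obtain ⟨f, hf, rfl⟩ : ∃ f ∈ G.edgeSet, c f = i := by
    by_contra! h
    simp [classDist_eq_top h] at hi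
  have hclass : {e | e ∈ G.edgeSet ∧ (τ ∘ c) e = τ (c f)} = {e | e ∈ G.edgeSet ∧ c e = c f} :=
    Set.ext fun e ↦ and_congr_right fun he ↦ hτc he hf
  exact ⟨τ (c f), by simpa only [classDist, hclass] using hi⟩

theorem IsEdgeLocatingColoring.exists_of_forall_ne_zero (hk : 0 < k) {c : Sym2 V → Fin (k + 1)}
    (hc : IsEdgeLocatingColoring G c) (h0 : ∀ e ∈ G.edgeSet, c e ≠ 0) :
    ∃ c' : Sym2 V → Fin k, IsEdgeLocatingColoring G c' := by
  refine ⟨_, hc.comp (τ := fun i ↦ ⟨i - 1, by omega⟩) ?_⟩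
  rintro _ ⟨e, he, rfl⟩ _ ⟨f, hf, rfl⟩ h
  have := h0 e he
  have := h0 f hf
  simp only [ne_eq, Fin.ext_iff, Fin.val_zero] at *
  omega

theorem edgeLocatingChromaticNumber_eq (hex : ∃ c : Sym2 V → Fin k, IsEdgeLocatingColoring G c)
    (hmin : ∀ k' (c : Sym2 V → Fin k'), IsEdgeLocatingColoring G c → k ≤ k') :
    edgeLocatingChromaticNumber G = k :=
  le_antisymm (Nat.sInf_le hex) (le_csInf ⟨k, hex⟩ fun k' ⟨c, hc⟩ ↦ hmin k' c hc)

section LabelSum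

variable {A : Type*} [AddCommGroup A]

def labelSum (ℓ : V → A) : Sym2 V → A :=
  Sym2.lift ⟨fun x y ↦ ℓ x + ℓ y, fun _ _ ↦ add_comm _ _⟩

@[simp]
theorem labelSum_mk (ℓ : V → A) (x y : V) : labelSum ℓ s(x, y) = ℓ x + ℓ y :=
  rfl

variable (ℓ : V ≃ A)

theorem eq_mk_labelSum_sub {e : Sym2 V} {x : V} (hx : x ∈ e) :
    e = s(x, ℓ.symm (labelSum ℓ e - ℓ x)) := by
  induction e using Sym2.ind with
  | h y z => rcases Sym2.mem_iff.1 hx with rfl | rfl <;> simp [Sym2.eq_swap]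

theorem isProperEdgeColoring_labelSum (G : SimpleGraph V) (σ : A ≃ Fin k) :
    IsProperEdgeColoring G (σ ∘ labelSum ℓ) := by
  rintro e - f - hne ⟨x, hxe, hxf⟩ hef
  rw [eq_mk_labelSum_sub ℓ hxe, eq_mk_labelSum_sub ℓ hxf, σ.injective hef] at hne
  exact hne rfl

variable {M : Set (Sym2 V)} (hM : ∀ e ∈ M, labelSum ℓ e = 0)
include hM

theorem mk_mem_edgeSet_of_add_ne_zero {x y : V} (hxy : x ≠ y) (hsum : ℓ x + ℓ y ≠ 0) :
    s(x, y) ∈ ((⊤ : SimpleGraph V).deleteEdges M).edgeSet :=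
  deleteEdges_adj.2 ⟨hxy, fun hm ↦ hsum (hM _ hm)⟩

theorem isUniversal_top_deleteEdges_symm_zero :
    ((⊤ : SimpleGraph V).deleteEdges M).IsUniversal (ℓ.symm 0) := fun w hw ↦
  mk_mem_edgeSet_of_add_ne_zero ℓ hM hw <| by
    rw [Equiv.apply_symm_apply, zero_add]
    exact fun h ↦ hw (ℓ.symm_apply_eq.2 h.symm)

variable (h2 : Function.Injective fun a : A ↦ a + a) (σ : A ≃ Fin k)
include h2

theorem incidentColors_labelSum_add_self {u v : V} (huv : u ≠ v) (hu : ℓ u ≠ 0) :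
    σ (ℓ u + ℓ u) ∈ incidentColors ((⊤ : SimpleGraph V).deleteEdges M) (σ ∘ labelSum ℓ) v ∧
      σ (ℓ u + ℓ u) ∉ incidentColors ((⊤ : SimpleGraph V).deleteEdges M) (σ ∘ labelSum ℓ) u := by
  constructor
  · refine ⟨s(v, ℓ.symm (ℓ u + ℓ u - ℓ v)), mk_mem_edgeSet_of_add_ne_zero ℓ hM ?_ ?_, by simp,
      Sym2.mem_mk_left _ _⟩
    · rw [ne_eq, eq_comm, Equiv.symm_apply_eq, sub_eq_iff_eq_add]
      exact fun h ↦ huv (ℓ.injective (h2 h))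
    · simpa using fun h ↦ hu (h2 (h.trans (add_zero 0).symm))
  · rintro ⟨e, he, hce, hue⟩
    rw [eq_mk_labelSum_sub ℓ hue, σ.injective hce, add_sub_cancel_right, Equiv.symm_apply_apply]
      at he
    exact he.1 rfl

theorem isEdgeLocatingColoring_labelSum :
    IsEdgeLocatingColoring ((⊤ : SimpleGraph V).deleteEdges M) (σ ∘ labelSum ℓ) := by
  refine isEdgeLocatingColoring_of_injective_incidentColors
    (.of_isUniversal (isUniversal_top_deleteEdges_symm_zero ℓ hM))
    (isProperEdgeColoring_labelSum ℓ _ σ) fun u v h ↦ by_contra fun huv ↦ ?_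
  rcases ne_or_eq (ℓ u) 0 with hu | hu
  · have := incidentColors_labelSum_add_self ℓ hM h2 σ huv hu
    rw [h] at this
    exact this.2 this.1
  · have hv : ℓ v ≠ 0 := fun hv ↦ huv (ℓ.injective (hu.trans hv.symm))
    have := incidentColors_labelSum_add_self ℓ hM h2 σ (Ne.symm huv) hv
    rw [← h] at this
    exact this.2 this.1

end LabelSum

theorem card_edgeFinset_top_deleteEdges [Fintype V] [DecidableEq V] {M : Set (Sym2 V)}
    (hM : M ⊆ (⊤ : SimpleGraph V).edgeSet) [Fintype ((⊤ : SimpleGraph V).deleteEdges M).edgeSet] :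
    #((⊤ : SimpleGraph V).deleteEdges M).edgeFinset = (Fintype.card V).choose 2 - M.ncard := by
  rw [← Set.ncard_coe_finset, coe_edgeFinset, edgeSet_deleteEdges, Set.ncard_sdiff hM,
    ← card_edgeFinset_top_eq_card_choose_two, ← Set.ncard_coe_finset, coe_edgeFinset]

theorem IsProperEdgeColoring.two_mul_add_one_le [Fintype V] {n : ℕ}
    (hV : Fintype.card V = 2 * n + 1) {M : Set (Sym2 V)} (hM : M ⊆ (⊤ : SimpleGraph V).edgeSet)
    (hMn : M.ncard < n) (hc : IsProperEdgeColoring ((⊤ : SimpleGraph V).deleteEdges M) c) :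
    2 * n + 1 ≤ k := by
  classical
  have hcount := hc.card_edgeFinset_le
  rw [card_edgeFinset_top_deleteEdges hM, hV, Nat.choose_two_right,
    show (2 * n + 1) * (2 * n + 1 - 1) / 2 = n * (2 * n + 1) by
      rw [Nat.add_sub_cancel, mul_comm, mul_assoc, Nat.mul_div_cancel_left _ two_pos],
    show (2 * n + 1) / 2 = n by omega, Nat.sub_le_iff_le_add] at hcount
  by_contra! hk
  nlinarith

theorem IsMatchingSet.eq_of_mem {G : SimpleGraph V} {M : Set (Sym2 V)} (hM : IsMatchingSet G M)
    {e f : Sym2 V} {x : V} (he : e ∈ M) (hf : f ∈ M) (hxe : x ∈ e) (hxf : x ∈ f) : e = f :=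
  by_contra fun hne ↦ hM.2 e he f hf hne x hxe hxf

theorem IsMatchingSet.exists_injective_range_eq [Finite V] {G : SimpleGraph V}
    {M : Set (Sym2 V)} (hM : IsMatchingSet G M) (hcard : M.ncard = k) :
    ∃ a : Fin k ⊕ Fin k → V, Function.Injective a ∧
      M = Set.range fun i ↦ s(a (.inl i), a (.inr i)) := by
  let q : Fin k ≃ M := (Finite.equivFinOfCardEq (by rwa [Nat.card_coe_set_eq])).symm
  have hq {i j : Fin k} {x : V} (hi : x ∈ (q i : Sym2 V)) (hj : x ∈ (q j : Sym2 V)) : i = j :=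
    q.injective (Subtype.ext (hM.eq_of_mem (q i).2 (q j).2 hi hj))
  have hout (i : Fin k) : s((q i : Sym2 V).out.1, (q i : Sym2 V).out.2) = q i := Quot.out_eq _
  refine ⟨Sum.elim (fun i ↦ (q i : Sym2 V).out.1) (fun i ↦ (q i : Sym2 V).out.2), ?_, ?_⟩
  · refine .sumElim (fun i j h ↦ hq (Sym2.out_fst_mem _) (by rw [h]; exact Sym2.out_fst_mem _))
      (fun i j h ↦ hq (Sym2.out_snd_mem _) (by rw [h]; exact Sym2.out_snd_mem _)) fun i j h ↦ ?_
    obtain rfl := hq (Sym2.out_fst_mem _) (by rw [h]; exact Sym2.out_snd_mem _)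
    have hnd := G.not_isDiag_of_mem_edgeSet (hM.1 (q i).2)
    rw [← hout i, Sym2.mk_isDiag_iff] at hnd
    exact hnd h
  · ext e
    simp only [Sum.elim_inl, Sum.elim_inr, hout, Set.mem_range]
    exact ⟨fun he ↦ ⟨q.symm ⟨e, he⟩, by simp⟩, by rintro ⟨i, rfl⟩; exact (q i).2⟩

theorem exists_equiv_apply_eq {W ι : Type*} [Fintype V] [Fintype W] [Finite ι]
    (hcard : Fintype.card V = Fintype.card W) {a : ι → V} {b : ι → W}
    (ha : Function.Injective a) (hb : Function.Injective b) : ∃ ℓ : V ≃ W, ∀ i, ℓ (a i) = b i := by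
  let e := Fintype.equivOfCardEq hcard
  obtain ⟨σ, hσ⟩ := Equiv.Perm.exists_extending_pair (e ∘ a) b (e.injective.comp ha) hb
  exact ⟨e.trans σ, hσ⟩

section NegPairs

variable (n : ℕ)

theorem ZMod.add_self_injective : Function.Injective fun x : ZMod (2 * n + 1) ↦ x + x := by
  intro x y (h : x + x = y + y)
  -- `n + 1` is the inverse of `2` modulo `2n + 1`
  have h2 : ((n : ZMod (2 * n + 1)) + 1) * 2 = 1 := by
    linear_combination (by exact_mod_cast ZMod.natCast_self (2 * n + 1) :
      (2 * n + 1 : ZMod (2 * n + 1)) = 0)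
  linear_combination ((n : ZMod (2 * n + 1)) + 1) * h - (x - y) * h2

def negPairLabel (k : ℕ) : Fin k ⊕ Fin k → ZMod (2 * n + 1) :=
  Sum.elim (fun i ↦ ((i + 1 : ℕ) : ZMod (2 * n + 1))) fun i ↦ -((i + 1 : ℕ) : ZMod (2 * n + 1))

theorem negPairLabel_injective (hk : k ≤ n) : Function.Injective (negPairLabel n k) := by
  have hcast : Function.Injective fun i : Fin k ↦ ((i + 1 : ℕ) : ZMod (2 * n + 1)) := by
    intro i j h
    have := congrArg ZMod.val h
    simp only [ZMod.val_cast_of_lt (show (i : ℕ) + 1 < 2 * n + 1 by omega),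
      ZMod.val_cast_of_lt (show (j : ℕ) + 1 < 2 * n + 1 by omega)] at this
    exact Fin.ext (by omega)
  refine hcast.sumElim (neg_injective.comp hcast) fun i j h ↦ ?_
  rw [eq_neg_iff_add_eq_zero, ← Nat.cast_add, ZMod.natCast_eq_zero_iff] at h
  exact absurd (Nat.le_of_dvd (by omega) h) (by omega)

theorem exists_negPairLabel_eq {x : ZMod (2 * n + 1)} (hx : x ≠ 0) :
    ∃ p, negPairLabel n n p = x := by
  have hv : x.val < 2 * n + 1 := ZMod.val_lt x
  have hv0 : x.val ≠ 0 := (ZMod.val_ne_zero x).2 hx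
  rcases le_or_gt x.val n with hle | hgt
  · refine ⟨.inl ⟨x.val - 1, by omega⟩, ?_⟩
    simp only [negPairLabel, Sum.elim_inl]
    rw [Nat.sub_add_cancel (Nat.one_le_iff_ne_zero.2 hv0), ZMod.natCast_zmod_val]
  · refine ⟨.inr ⟨2 * n - x.val, by omega⟩, ?_⟩
    have h : ((2 * n - x.val + 1 : ℕ) : ZMod (2 * n + 1)) + x = 0 := by
      conv_lhs => arg 2; rw [← ZMod.natCast_zmod_val x]
      rw [← Nat.cast_add, show 2 * n - x.val + 1 + x.val = 2 * n + 1 by omega, ZMod.natCast_self]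
    simpa only [negPairLabel, Sum.elim_inr, neg_eq_iff_add_eq_zero] using h

theorem IsMatchingSet.exists_equiv_zmod_labelSum_eq_zero [Fintype V]
    (hV : Fintype.card V = 2 * n + 1) {M : Set (Sym2 V)}
    (hM : IsMatchingSet (⊤ : SimpleGraph V) M) (hcard : M.ncard = k) (hk : k ≤ n) :
    ∃ ℓ : V ≃ ZMod (2 * n + 1), (∀ e ∈ M, labelSum ℓ e = 0) ∧
      (k = n → ∀ e ∈ ((⊤ : SimpleGraph V).deleteEdges M).edgeSet, labelSum ℓ e ≠ 0) := by
  obtain ⟨a, ha, rfl⟩ := hM.exists_injective_range_eq hcard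
  obtain ⟨ℓ, hℓ⟩ := exists_equiv_apply_eq (by simp [hV]) ha (negPairLabel_injective n hk)
  refine ⟨ℓ, by rintro _ ⟨i, rfl⟩; simp [hℓ, negPairLabel], ?_⟩
  rintro rfl e he hsum
  induction e using Sym2.ind with | h x y => ?_
  obtain ⟨hxy, hnot⟩ := deleteEdges_adj.1 he
  rw [labelSum_mk, add_eq_zero_iff_eq_neg'] at hsum
  have hx : ℓ x ≠ 0 := fun h ↦ hxy (ℓ.injective (by rw [h, hsum, h, neg_zero]))
  obtain ⟨i | i, hi⟩ := exists_negPairLabel_eq _ hx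
  · have hxi : a (.inl i) = x := ℓ.injective (by rw [hℓ, hi])
    have hyi : a (.inr i) = y := ℓ.injective (by rw [hℓ, hsum, ← hi]; rfl)
    exact hnot ⟨i, show s(a (.inl i), a (.inr i)) = s(x, y) by rw [hxi, hyi]⟩
  · have hxi : a (.inr i) = x := ℓ.injective (by rw [hℓ, hi])
    have hyi : a (.inl i) = y :=
      ℓ.injective (by rw [hℓ, hsum, ← hi, negPairLabel, Sum.elim_inr, neg_neg]; rfl)
    exact hnot ⟨i, show s(a (.inl i), a (.inr i)) = s(x, y) by rw [hxi, hyi, Sym2.eq_swap]⟩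

end NegPairs

theorem stmt_9_general (n k : ℕ) (hn : 1 ≤ n) (hkn : k ≤ n)
    (M : Set (Sym2 (Fin (2 * n + 1))))
    (hM : IsMatchingSet (⊤ : SimpleGraph (Fin (2 * n + 1))) M) (hcard : M.ncard = k) :
    edgeLocatingChromaticNumber ((⊤ : SimpleGraph (Fin (2 * n + 1))).deleteEdges M) =
      if k = n then 2 * n else 2 * n + 1 := by
  classical
  obtain ⟨ℓ, hℓM, hℓn⟩ := hM.exists_equiv_zmod_labelSum_eq_zero n (Fintype.card_fin _) hcard hkn
  let σ : ZMod (2 * n + 1) ≃ Fin (2 * n + 1) := (ZMod.finEquiv (2 * n + 1)).symm.toEquiv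
  have hsum := isEdgeLocatingColoring_labelSum ℓ hℓM (ZMod.add_self_injective n) σ
  split_ifs with hk
  · refine edgeLocatingChromaticNumber_eq (hsum.exists_of_forall_ne_zero (by omega) fun e he ↦ ?_)
      fun k' c hc ↦ ?_
    · simpa [σ] using hℓn hk e he
    · have hdeg := hc.isProperEdgeColoring.degree_le (ℓ.symm 0)
      rwa [(degree_eq_card_sub_one _ _).2 (isUniversal_top_deleteEdges_symm_zero ℓ hℓM),
        Fintype.card_fin, Nat.add_sub_cancel] at hdeg
  · exact edgeLocatingChromaticNumber_eq ⟨_, hsum⟩ fun k' c hc ↦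
      hc.isProperEdgeColoring.two_mul_add_one_le (Fintype.card_fin _) hM.1 (by omega)

/-- For `n ≥ 1` and a matching `M_k` with `1 ≤ k ≤ n` edges in `K_{2n+1}`, the edge-locating
chromatic number of `K_{2n+1} - M_k` is `2n` if `k = n`, and `2n + 1` if `1 ≤ k ≤ n - 1`. -/
theorem stmt_9 (n k : ℕ) (hn : 1 ≤ n) (hk1 : 1 ≤ k) (hkn : k ≤ n)
    (M : Set (Sym2 (Fin (2 * n + 1))))
    (hM : IsMatchingSet (⊤ : SimpleGraph (Fin (2 * n + 1))) M) (hcard : M.ncard = k) :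
    edgeLocatingChromaticNumber ((⊤ : SimpleGraph (Fin (2 * n + 1))).deleteEdges M) =
      if k = n then 2 * n else 2 * n + 1 :=
  stmt_9_general n k hn hkn M hM hcard
end
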